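/- (Corollary 3.) Under Assumption 1 and the stratification setup, assume conditions (i)–(iii): (i) E_jk(ε_jk | S) = δ_jk and E_jk(ε_kj | S) = δ_kj almost surely; (ii) Cov_jk(ε_jk, μ_jk(X) | S) = 0 and Cov_jk(ε_kj, μ_kj(X) | S) = 0 almost surely; (iii) Cov_jk(ε_jk, μ_kj(X) | S) = 0 and Cov_jk(ε_kj, μ_jk(X) | S) = 0 almost surely. Let Σ_sipw = diag( E_jk[(Y^(j)−θ_jk)²/π_j(S)], E_jk[(Y^(k)−θ_kj)²/π_k(S)] ) and Σ_saipw = diag( E_jk[(ε_jk−δ_jk)²/π_j(S)], E_jk[(ε_kj−δ_kj)²/π_k(S)] ) + Λ_jk, where Λ_jk has diagonal (λ_jk, λ_kj) and off-diagonal entries c_jk. Then Σ_sipw − Σ_saipw equals the 2×2 matrix with diagonal entries E_jk[ {μ_jk(X) − E_jk μ_jk(X)}² (1/π_j(S) − 1) ] and E_jk[ {μ_kj(X) − E_jk μ_kj(X)}² (1/π_k(S) − 1) ] and both off-diagonal entries −Cov_jk(μ_jk(X), μ_kj(X)); moreover, if π_j(S) + π_k(S) ≤ 1 almost surely on the ECE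 event, this matrix is positive semidefinite. -/

import Mathlib

/-!
On the ECE event write `Y^(j) - θ_jk = (ε_jk - δ_jk) + (μ_jk(X) - E μ_jk(X))`. Conditions (i)–(iii)
say that within every stratum of `S` the centred residual has mean zero and is uncorrelated
with both working-model predictions, so by the tower property over the finitely many strata
it is orthogonal to `μ(X) - c` times any function of `S`, in particular `1` and `1 / π_j(S)`.
Expanding the squares and the covariance, every cross term vanishes and the stated matrix
remains. Its quadratic form at `(u, v)` is the integral of
`u² B² (1/p - 1) + v² D² (1/q - 1) - 2 u v B D`, which is pointwise nonnegative when
`p + q ≤ 1`, because then `1/p - 1 ≥ q/p` and `1/q - 1 ≥ p/q`.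
-/

open MeasureTheory ProbabilityTheory Filter Set

noncomputable section

/-- Covariance of two real-valued random variables under the measure `μ`. -/
def cov {Ω : Type*} [MeasurableSpace Ω] (μ : Measure Ω) (f g : Ω → ℝ) : ℝ :=
  ∫ ω, (f ω - ∫ x, f x ∂μ) * (g ω - ∫ x, g x ∂μ) ∂μ

/-- The conditional mean `E_μ(f | S)` of `f` given a finitely-valued variable `S`,
as a function on the sample space. -/
def condMeanOn {Ω 𝓢 : Type*} [MeasurableSpace Ω] (μ : Measure Ω) (S : Ω → 𝓢) (f : Ω → ℝ) :
    Ω → ℝ :=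
  fun ω => ∫ x, f x ∂μ[|{ω' | S ω' = S ω}]

/-- The conditional variance `Var_μ(f | S)` of `f` given `S`, as a function on the
sample space. -/
def condVarOn {Ω 𝓢 : Type*} [MeasurableSpace Ω] (μ : Measure Ω) (S : Ω → 𝓢) (f : Ω → ℝ) :
    Ω → ℝ :=
  fun ω => ProbabilityTheory.variance f μ[|{ω' | S ω' = S ω}]

/-- The conditional covariance `Cov_μ(f, g | S)` of `f` and `g` given `S`, as a function on
the sample space. -/
def condCovOn {Ω 𝓢 : Type*} [MeasurableSpace Ω] (μ : Measure Ω) (S : Ω → 𝓢) (f g : Ω → ℝ) :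
    Ω → ℝ :=
  fun ω => cov μ[|{ω' | S ω' = S ω}] f g

lemma cov_eq_covariance {Ω : Type*} [MeasurableSpace Ω] (μ : Measure Ω) (f g : Ω → ℝ) :
    cov μ f g = covariance f g μ := rfl

-- Also valid at `p = 0`, where `x / 0 = 0` makes both sides `0`.
lemma add_sq_div_eq (a b p : ℝ) :
    (a + b) ^ 2 / p = a ^ 2 / p + 2 * (a * b * p⁻¹) + b ^ 2 * (1 / p - 1) + b ^ 2 := by
  rcases eq_or_ne p 0 with rfl | hp
  · simp
  · field_simp
    ring

lemma two_mul_mul_le_of_add_le_one {p q : ℝ} (hp : 0 < p) (hq : 0 < q) (hpq : p + q ≤ 1)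
    (u v : ℝ) : 2 * (u * v) ≤ u ^ 2 * (1 / p - 1) + v ^ 2 * (1 / q - 1) := by
  have hamgm : 2 * (u * v) ≤ u ^ 2 * (q / p) + v ^ 2 * (p / q) := by
    rw [mul_div_assoc', mul_div_assoc', div_add_div _ _ hp.ne' hq.ne', le_div_iff₀ (by positivity)]
    nlinarith [sq_nonneg (u * q - v * p)]
  have hqp : q / p ≤ 1 / p - 1 := by
    rw [le_sub_iff_add_le, div_add_one hp.ne', div_le_div_iff_of_pos_right hp]
    linarith
  have hpq' : p / q ≤ 1 / q - 1 := by
    rw [le_sub_iff_add_le, div_add_one hq.ne', div_le_div_iff_of_pos_right hq]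
    linarith
  exact hamgm.trans (by gcongr)

lemma Matrix.posSemidef_fin_two_of_forall_nonneg (a b c : ℝ)
    (h : ∀ u v : ℝ, 0 ≤ a * u ^ 2 + 2 * c * u * v + b * v ^ 2) : (!![a, c; c, b]).PosSemidef := by
  refine .of_dotProduct_mulVec_nonneg ?_ fun x => ?_
  · ext i j
    fin_cases i <;> fin_cases j <;> simp
  · simp only [dotProduct, Pi.star_apply, star_trivial, mulVec, of_apply, cons_val',
      cons_val_fin_one, Fin.sum_univ_two, Fin.isValue, cons_val_zero, cons_val_one]
    linarith [h (x 0) (x 1)]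

section Moments

variable {Ω : Type*} [MeasurableSpace Ω] {μ : Measure Ω}

lemma MeasureTheory.MemLp.cond {E : Type*} [NormedAddCommGroup E] {f : Ω → E}
    {p : ENNReal} (hf : MemLp f p μ) {s : Set Ω} (hs : μ s ≠ 0) : MemLp f p μ[|s] :=
  (hf.restrict s).smul_measure (ENNReal.inv_ne_top.2 hs)

lemma setIntegral_eq_measureReal_mul_integral_cond [IsFiniteMeasure μ] {s : Set Ω}
    (hs : μ s ≠ 0) (f : Ω → ℝ) :
    ∫ ω in s, f ω ∂μ = μ.real s * ∫ ω, f ω ∂μ[|s] := by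
  rw [ProbabilityTheory.cond, integral_smul_measure, ENNReal.toReal_inv, smul_eq_mul,
    ← mul_assoc, measureReal_def,
    mul_inv_cancel₀ (ENNReal.toReal_ne_zero.2 ⟨hs, measure_ne_top μ s⟩), one_mul]

lemma integral_sub_mul_sub_eq_covariance [IsProbabilityMeasure μ] {f g : Ω → ℝ}
    (hf : MemLp f 2 μ) (hg : MemLp g 2 μ) (c : ℝ) :
    ∫ ω, (f ω - ∫ x, f x ∂μ) * (g ω - c) ∂μ = covariance f g μ := by
  have hsplit : ∀ ω, (f ω - ∫ x, f x ∂μ) * (g ω - c)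
      = (f ω - ∫ x, f x ∂μ) * (g ω - ∫ x, g x ∂μ) + (f ω - ∫ x, f x ∂μ) * (∫ x, g x ∂μ - c) :=
    fun ω => by ring
  have hf₁ : Integrable (fun ω => f ω - ∫ x, f x ∂μ) μ :=
    (hf.integrable one_le_two).sub (integrable_const _)
  have hfg : Integrable (fun ω => (f ω - ∫ x, f x ∂μ) * (g ω - ∫ x, g x ∂μ)) μ :=
    (hf.sub (memLp_const _)).integrable_mul (hg.sub (memLp_const _))
  simp_rw [hsplit]
  rw [integral_add hfg (hf₁.mul_const _), integral_mul_const,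
    integral_sub (hf.integrable one_le_two) (integrable_const _)]
  simp [covariance]

theorem covariance_sub_covariance_residual_eq [IsFiniteMeasure μ] {Y₁ Y₂ ε₁ ε₂ g₁ g₂ : Ω → ℝ}
    (hY₁ : MemLp Y₁ 2 μ) (hY₂ : MemLp Y₂ 2 μ) (hg₁ : MemLp g₁ 2 μ) (hg₂ : MemLp g₂ 2 μ)
    (hε₁ : ∀ ω, ε₁ ω = Y₁ ω - g₁ ω) (hε₂ : ∀ ω, ε₂ ω = Y₂ ω - g₂ ω)
    (h₁₂ : covariance ε₁ g₂ μ = 0) (h₂₁ : covariance ε₂ g₁ μ = 0) :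
    covariance Y₁ Y₂ μ - covariance ε₁ ε₂ μ = covariance g₁ g₂ μ := by
  obtain rfl : ε₁ = Y₁ - g₁ := funext hε₁
  obtain rfl : ε₂ = Y₂ - g₂ := funext hε₂
  rw [covariance_comm, covariance_sub_right hg₁ hY₂ hg₂] at h₂₁
  rw [covariance_sub_left hY₁ hg₁ hg₂] at h₁₂
  rw [covariance_sub_left hY₁ hg₁ (hY₂.sub hg₂), covariance_sub_right hY₁ hY₂ hg₂,
    covariance_sub_right hg₁ hY₂ hg₂]
  linarith

theorem posSemidef_integral_weighted_moments {B D p q : Ω → ℝ}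
    (hpq : ∀ᵐ ω ∂μ, 0 < p ω ∧ 0 < q ω ∧ p ω + q ω ≤ 1)
    (hB : Integrable (fun ω => B ω ^ 2 * (1 / p ω - 1)) μ)
    (hD : Integrable (fun ω => D ω ^ 2 * (1 / q ω - 1)) μ)
    (hBD : Integrable (fun ω => B ω * D ω) μ) :
    (!![∫ ω, B ω ^ 2 * (1 / p ω - 1) ∂μ, -∫ ω, B ω * D ω ∂μ;
        -∫ ω, B ω * D ω ∂μ, ∫ ω, D ω ^ 2 * (1 / q ω - 1) ∂μ]).PosSemidef := by
  refine Matrix.posSemidef_fin_two_of_forall_nonneg _ _ _ fun u v => ?_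
  have hquad : 0 ≤ ∫ ω, (u ^ 2 * (B ω ^ 2 * (1 / p ω - 1)) + v ^ 2 * (D ω ^ 2 * (1 / q ω - 1))
      - 2 * u * v * (B ω * D ω)) ∂μ := by
    refine integral_nonneg_of_ae ?_
    filter_upwards [hpq] with ω ⟨hp, hq, hsum⟩
    have := two_mul_mul_le_of_add_le_one hp hq hsum (u * B ω) (v * D ω)
    simp only [Pi.zero_apply]
    linarith
  rw [integral_sub ((hB.const_mul _).fun_add (hD.const_mul _)) (hBD.const_mul _),
    integral_add (hB.const_mul _) (hD.const_mul _), integral_const_mul, integral_const_mul,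
    integral_const_mul] at hquad
  linarith

end Moments

section Strata

variable {Ω 𝓢 : Type*} [MeasurableSpace Ω] {μ : Measure Ω} {S : Ω → 𝓢}

lemma ae_measure_fiber_ne_zero [Countable 𝓢] : ∀ᵐ ω ∂μ, μ {ω' | S ω' = S ω} ≠ 0 := by
  have hnull : {ω | ¬ μ {ω' | S ω' = S ω} ≠ 0} = ⋃ s ∈ {s | μ (S ⁻¹' {s}) = 0}, S ⁻¹' {s} := by
    ext ω
    simp only [ne_eq, Decidable.not_not, mem_ofPred_eq, mem_iUnion, mem_preimage,
      mem_singleton_iff, exists_prop, exists_eq_right']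
    rfl
  rw [ae_iff, hnull]
  exact (measure_biUnion_null_iff (to_countable _)).2 fun _ hs => hs

variable [Fintype 𝓢] [MeasurableSpace 𝓢] [MeasurableSingletonClass 𝓢]

lemma integral_eq_sum_setIntegral_fiber (hS : Measurable S) {f : Ω → ℝ}
    (hf : Integrable f μ) : ∫ ω, f ω ∂μ = ∑ s, ∫ ω in S ⁻¹' {s}, f ω ∂μ := by
  rw [← integral_iUnion_fintype (fun s => hS (measurableSet_singleton s))
    (pairwise_disjoint_fiber S) fun _ => hf.integrableOn, ← preimage_iUnion,
    iUnion_of_singleton, preimage_univ, Measure.restrict_univ]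

lemma integral_mul_eq_zero_of_ae_condMeanOn_eq_zero [IsFiniteMeasure μ] (hS : Measurable S)
    {F w : Ω → ℝ} (hw : ∀ ω ω', S ω = S ω' → w ω = w ω')
    (hF : ∀ᵐ ω ∂μ, condMeanOn μ S F ω = 0) : ∫ ω, F ω * w ω ∂μ = 0 := by
  by_cases hint : Integrable (fun ω => F ω * w ω) μ
  swap
  · exact integral_undef hint
  rw [integral_eq_sum_setIntegral_fiber hS hint]
  refine Finset.sum_eq_zero fun s _ => ?_
  by_cases hs : μ (S ⁻¹' {s}) = 0
  · rw [Measure.restrict_eq_zero.2 hs, integral_zero_measure]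
  obtain ⟨ω₀, hω₀, hF₀⟩ := Measure.exists_mem_of_measure_ne_zero_of_ae hs (ae_restrict_of_ae hF)
  have hw₀ : EqOn (fun ω => F ω * w ω) (fun ω => F ω * w ω₀) (S ⁻¹' {s}) :=
    fun ω hω => by simp only [hw ω ω₀ (hω.trans hω₀.symm)]
  rw [setIntegral_congr_fun (hS (measurableSet_singleton s)) hw₀, integral_mul_const,
    setIntegral_eq_measureReal_mul_integral_cond hs]
  have hs₀ : S ω₀ = s := hω₀
  simp only [condMeanOn, hs₀] at hF₀
  rw [show S ⁻¹' {s} = {ω' | S ω' = s} from rfl, hF₀, mul_zero, zero_mul]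

theorem integral_sub_mul_sub_mul_eq_zero [IsFiniteMeasure μ] (hS : Measurable S)
    {f g : Ω → ℝ} (hf : MemLp f 2 μ) (hg : MemLp g 2 μ) {δ : ℝ}
    (hmean : ∀ᵐ ω ∂μ, condMeanOn μ S f ω = δ) (hcov : ∀ᵐ ω ∂μ, condCovOn μ S f g ω = 0)
    (c : ℝ) {w : Ω → ℝ} (hw : ∀ ω ω', S ω = S ω' → w ω = w ω') :
    ∫ ω, (f ω - δ) * (g ω - c) * w ω ∂μ = 0 := by
  refine integral_mul_eq_zero_of_ae_condMeanOn_eq_zero hS hw ?_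
  filter_upwards [hmean, hcov, ae_measure_fiber_ne_zero (S := S)] with ω hmeanω hcovω hω
  have := cond_isProbabilityMeasure hω
  rw [condMeanOn, ← hmeanω, condMeanOn,
    integral_sub_mul_sub_eq_covariance (hf.cond hω) (hg.cond hω)]
  exact hcovω

theorem covariance_eq_zero_of_ae_condCovOn_eq_zero [IsProbabilityMeasure μ]
    (hS : Measurable S) {f g : Ω → ℝ} (hf : MemLp f 2 μ) (hg : MemLp g 2 μ)
    (hmean : ∀ᵐ ω ∂μ, condMeanOn μ S f ω = ∫ x, f x ∂μ)
    (hcov : ∀ᵐ ω ∂μ, condCovOn μ S f g ω = 0) : covariance f g μ = 0 := by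
  have h := integral_sub_mul_sub_mul_eq_zero hS hf hg hmean hcov 0 (w := fun _ => 1)
    fun _ _ _ => rfl
  simp only [mul_one] at h
  rwa [integral_sub_mul_sub_eq_covariance hf hg] at h

theorem integral_sq_div_sub_residual_eq [IsProbabilityMeasure μ] (hS : Measurable S)
    {Y ε g p : Ω → ℝ} (hY : MemLp Y 2 μ) (hg : MemLp g 2 μ) (hε : ∀ ω, ε ω = Y ω - g ω)
    (hmean : ∀ᵐ ω ∂μ, condMeanOn μ S ε ω = ∫ x, ε x ∂μ)
    (hcov : ∀ᵐ ω ∂μ, condCovOn μ S ε g ω = 0) (hp : ∀ ω ω', S ω = S ω' → p ω = p ω')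
    (hYp : Integrable (fun ω => (Y ω - ∫ x, Y x ∂μ) ^ 2 / p ω) μ)
    (hεp : Integrable (fun ω => (ε ω - ∫ x, ε x ∂μ) ^ 2 / p ω) μ)
    (hgp : Integrable (fun ω => (g ω - ∫ x, g x ∂μ) ^ 2 * (1 / p ω - 1)) μ) :
    ∫ ω, (Y ω - ∫ x, Y x ∂μ) ^ 2 / p ω ∂μ
        - (∫ ω, (ε ω - ∫ x, ε x ∂μ) ^ 2 / p ω ∂μ + (variance Y μ - variance ε μ))
      = ∫ ω, (g ω - ∫ x, g x ∂μ) ^ 2 * (1 / p ω - 1) ∂μ := by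
  have hYεg : Y = ε + g := funext fun ω => by simp [hε]
  have hε₂ : MemLp ε 2 μ := by
    rw [show ε = Y - g from funext hε]
    exact hY.sub hg
  set δ := ∫ x, ε x ∂μ
  set m := ∫ x, g x ∂μ
  have hg₂ : Integrable (fun ω => (g ω - m) ^ 2) μ :=
    (hg.sub (memLp_const m)).integrable_sq
  have hvar : variance Y μ - variance ε μ = ∫ ω, (g ω - m) ^ 2 ∂μ := by
    rw [hYεg, variance_add hε₂ hg,
      covariance_eq_zero_of_ae_condCovOn_eq_zero hS hε₂ hg hmean hcov,
      variance_eq_integral hg.aemeasurable]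
    ring
  have hθ : ∫ x, Y x ∂μ = δ + m := by
    simp only [hYεg, Pi.add_apply]
    exact integral_add (hε₂.integrable one_le_two) (hg.integrable one_le_two)
  have hsplit : ∀ ω, (Y ω - ∫ x, Y x ∂μ) ^ 2 / p ω
      = (ε ω - δ) ^ 2 / p ω + 2 * ((ε ω - δ) * (g ω - m) * (p ω)⁻¹)
        + (g ω - m) ^ 2 * (1 / p ω - 1) + (g ω - m) ^ 2 := fun ω => by
    rw [← add_sq_div_eq, hθ, hε]
    ring_nf
  have hcross : ∫ ω, (ε ω - δ) * (g ω - m) * (p ω)⁻¹ ∂μ = 0 :=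
    integral_sub_mul_sub_mul_eq_zero hS hε₂ hg hmean hcov m fun ω ω' h => by rw [hp ω ω' h]
  have hcross_int : Integrable (fun ω => 2 * ((ε ω - δ) * (g ω - m) * (p ω)⁻¹)) μ := by
    refine (((hYp.sub hεp).sub hgp).sub hg₂).congr (ae_of_all _ fun ω => ?_)
    simp only [Pi.sub_apply, hsplit]
    ring
  simp_rw [hsplit]
  rw [integral_add ((hεp.fun_add hcross_int).fun_add hgp) hg₂,
    integral_add (hεp.fun_add hcross_int) hgp, integral_add hεp hcross_int,
    integral_const_mul, hcross, hvar]
  ring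

end Strata

theorem stmt_14_general
    {Ω 𝓩 : Type*} [MeasurableSpace Ω]
    [MeasurableSpace 𝓩]
    (P : Measure Ω) [IsProbabilityMeasure P]
    {J : ℕ} (Z : Ω → 𝓩) (Y : Fin J → Ω → ℝ)
    (hZ : Measurable Z)
    (hY2 : ∀ m, MemLp (Y m) 2 P)
    (π : Fin J → 𝓩 → ℝ) (hπmeas : ∀ m, Measurable (π m))
    (j k : Fin J)
    -- the ECE event, with positive probability
    (ECE : Set Ω) (hECE : ECE = {ω | 0 < π j (Z ω) ∧ 0 < π k (Z ω)})
    (hECEpos : P ECE ≠ 0)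
    -- stratification: S is a function of Z with finitely many values, and π_j(Z), π_k(Z)
    -- are constant on every level of S
    {𝓢 : Type*} [Fintype 𝓢] [MeasurableSpace 𝓢] [MeasurableSingletonClass 𝓢]
    (S : Ω → 𝓢) (hSZ : ∃ g : 𝓩 → 𝓢, Measurable g ∧ ∀ ω, S ω = g (Z ω))
    (hconstj : ∀ ω ω', S ω = S ω' → π j (Z ω) = π j (Z ω'))
    (hconstk : ∀ ω ω', S ω = S ω' → π k (Z ω) = π k (Z ω'))
    -- working model: a covariate sub-vector X of W and a function μjk of X
    {𝓧 : Type*}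
    (X : Ω → 𝓧)
    (μjk : 𝓧 → ℝ) (hμjk2 : MemLp (fun ω => μjk (X ω)) 2 P)
    (μkj : 𝓧 → ℝ) (hμkj2 : MemLp (fun ω => μkj (X ω)) 2 P)
    -- θ's, residuals, δ's, λ's and c_jk
    (θjk θkj : ℝ) (hθjk : θjk = ∫ ω, Y j ω ∂P[|ECE]) (hθkj : θkj = ∫ ω, Y k ω ∂P[|ECE])
    (εjk εkj : Ω → ℝ)
    (hεjk : ∀ ω, εjk ω = Y j ω - μjk (X ω)) (hεkj : ∀ ω, εkj ω = Y k ω - μkj (X ω))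
    (δjk δkj : ℝ)
    (hδjk : δjk = ∫ ω, εjk ω ∂P[|ECE]) (hδkj : δkj = ∫ ω, εkj ω ∂P[|ECE])
    (lamjk lamkj : ℝ)
    (hlamjk : lamjk = variance (Y j) P[|ECE] - variance εjk P[|ECE])
    (hlamkj : lamkj = variance (Y k) P[|ECE] - variance εkj P[|ECE])
    (cjk : ℝ) (hcjk : cjk = cov P[|ECE] (Y j) (Y k) - cov P[|ECE] εjk εkj)
    -- conditions (i)–(iii)
    (hU1 : ∀ᵐ ω ∂P[|ECE], condMeanOn P[|ECE] S εjk ω = δjk)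
    (hU2 : ∀ᵐ ω ∂P[|ECE], condMeanOn P[|ECE] S εkj ω = δkj)
    (hii1 : ∀ᵐ ω ∂P[|ECE], condCovOn P[|ECE] S εjk (fun x => μjk (X x)) ω = 0)
    (hii2 : ∀ᵐ ω ∂P[|ECE], condCovOn P[|ECE] S εkj (fun x => μkj (X x)) ω = 0)
    (hiii1 : ∀ᵐ ω ∂P[|ECE], condCovOn P[|ECE] S εjk (fun x => μkj (X x)) ω = 0)
    (hiii2 : ∀ᵐ ω ∂P[|ECE], condCovOn P[|ECE] S εkj (fun x => μjk (X x)) ω = 0)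
    -- finiteness of the displayed conditional moments
    (hIntj : Integrable (fun ω => (Y j ω - θjk) ^ 2 / π j (Z ω)) P[|ECE])
    (hIntk : Integrable (fun ω => (Y k ω - θkj) ^ 2 / π k (Z ω)) P[|ECE])
    (hIntjε : Integrable (fun ω => (εjk ω - δjk) ^ 2 / π j (Z ω)) P[|ECE])
    (hIntkε : Integrable (fun ω => (εkj ω - δkj) ^ 2 / π k (Z ω)) P[|ECE])
    (hIntjμ : Integrable
      (fun ω => (μjk (X ω) - ∫ x, μjk (X x) ∂P[|ECE]) ^ 2 * (1 / π j (Z ω) - 1)) P[|ECE])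
    (hIntkμ : Integrable
      (fun ω => (μkj (X ω) - ∫ x, μkj (X x) ∂P[|ECE]) ^ 2 * (1 / π k (Z ω) - 1)) P[|ECE])
    -- the matrices
    (Ssipw Ssaipw M : Matrix (Fin 2) (Fin 2) ℝ)
    (hSsipw : Ssipw =
      !![∫ ω, (Y j ω - θjk) ^ 2 / π j (Z ω) ∂P[|ECE], 0;
         0, ∫ ω, (Y k ω - θkj) ^ 2 / π k (Z ω) ∂P[|ECE]])
    (hSsaipw : Ssaipw =
      !![∫ ω, (εjk ω - δjk) ^ 2 / π j (Z ω) ∂P[|ECE], 0;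
         0, ∫ ω, (εkj ω - δkj) ^ 2 / π k (Z ω) ∂P[|ECE]]
      + !![lamjk, cjk; cjk, lamkj])
    (hM : M =
      !![∫ ω, (μjk (X ω) - ∫ x, μjk (X x) ∂P[|ECE]) ^ 2 * (1 / π j (Z ω) - 1) ∂P[|ECE],
           -cov P[|ECE] (fun x => μjk (X x)) (fun x => μkj (X x));
         -cov P[|ECE] (fun x => μjk (X x)) (fun x => μkj (X x)),
           ∫ ω, (μkj (X ω) - ∫ x, μkj (X x) ∂P[|ECE]) ^ 2 * (1 / π k (Z ω) - 1) ∂P[|ECE]]) :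
    Ssipw - Ssaipw = M
    ∧ ((∀ᵐ ω ∂P[|ECE], π j (Z ω) + π k (Z ω) ≤ 1) → M.PosSemidef) := by
  obtain ⟨gS, hgS, hSg⟩ := hSZ
  obtain rfl : S = gS ∘ Z := funext hSg
  have hS := hgS.comp hZ
  have hECEmeas : MeasurableSet ECE := hECE ▸
    (measurableSet_lt measurable_const ((hπmeas j).comp hZ)).inter
      (measurableSet_lt measurable_const ((hπmeas k).comp hZ))
  have := cond_isProbabilityMeasure hECEpos
  have hL2 {f : Ω → ℝ} (hf : MemLp f 2 P) : MemLp f 2 P[|ECE] := hf.cond hECEpos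
  have hεjk2 : MemLp εjk 2 P[|ECE] :=
    hL2 (((hY2 j).sub hμjk2).ae_eq (ae_of_all _ fun ω => (hεjk ω).symm))
  have hεkj2 : MemLp εkj 2 P[|ECE] :=
    hL2 (((hY2 k).sub hμkj2).ae_eq (ae_of_all _ fun ω => (hεkj ω).symm))
  subst hθjk hθkj hδjk hδkj hlamjk hlamkj hcjk hSsipw hSsaipw hM
  have hdiag_j := integral_sq_div_sub_residual_eq hS (hL2 (hY2 j)) (hL2 hμjk2) hεjk hU1 hii1
    hconstj hIntj hIntjε hIntjμ
  have hdiag_k := integral_sq_div_sub_residual_eq hS (hL2 (hY2 k)) (hL2 hμkj2) hεkj hU2 hii2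
    hconstk hIntk hIntkε hIntkμ
  have hoff := covariance_sub_covariance_residual_eq (hL2 (hY2 j)) (hL2 (hY2 k)) (hL2 hμjk2)
    (hL2 hμkj2) hεjk hεkj
    (covariance_eq_zero_of_ae_condCovOn_eq_zero hS hεjk2 (hL2 hμkj2) hU1 hiii1)
    (covariance_eq_zero_of_ae_condCovOn_eq_zero hS hεkj2 (hL2 hμjk2) hU2 hiii2)
  refine ⟨?_, fun hsum => ?_⟩
  · ext a b
    fin_cases a <;> fin_cases b <;> simp [cov_eq_covariance] at hdiag_j hdiag_k ⊢ <;> linarith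
  · refine posSemidef_integral_weighted_moments (p := fun ω => π j (Z ω))
      (q := fun ω => π k (Z ω)) ?_ hIntjμ hIntkμ
      (((hL2 hμjk2).sub (memLp_const _)).integrable_mul ((hL2 hμkj2).sub (memLp_const _)))
    filter_upwards [ae_cond_mem hECEmeas, hsum] with ω hω hω_sum
    rw [hECE] at hω
    exact ⟨hω.1, hω.2, hω_sum⟩

/-- Corollary 3: under the calibration conditions (i)–(iii),
Σ_sipw − Σ_saipw has the displayed form and is positive semidefinite. -/
theorem stmt_14
    {Ω 𝓩 𝓦 : Type*} [MeasurableSpace Ω] [StandardBorelSpace Ω]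
    [MeasurableSpace 𝓩] [MeasurableSpace 𝓦]
    (P : Measure Ω) [IsProbabilityMeasure P]
    {J : ℕ} (Z : Ω → 𝓩) (W : Ω → 𝓦) (A : Ω → Fin J) (Y : Fin J → Ω → ℝ)
    (hZ : Measurable Z) (hW : Measurable W) (hA : Measurable A)
    (hY : ∀ m, Measurable (Y m)) (hY2 : ∀ m, MemLp (Y m) 2 P)
    (π : Fin J → 𝓩 → ℝ) (hπmeas : ∀ m, Measurable (π m))
    (hπ01 : ∀ m z, π m z ∈ Set.Icc (0:ℝ) 1)
    (hπsum : ∀ z, ∑ m, π m z = 1)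
    -- Assumption 1: A ⟂ (W, Y^(1),…,Y^(J)) given Z
    (hCI : CondIndepFun (MeasurableSpace.comap Z inferInstance) hZ.comap_le A
        (fun ω => (W ω, fun m => Y m ω)) P)
    -- Assumption 1: P(A = m | Z) = π_m(Z) a.s.
    (hprop : ∀ m : Fin J,
      (P[ Set.indicator {ω' | A ω' = m} (fun _ => (1:ℝ)) | MeasurableSpace.comap Z inferInstance])
        =ᵐ[P] fun ω => π m (Z ω))
    (j k : Fin J) (hjk : j ≠ k)
    -- the ECE event, with positive probability
    (ECE : Set Ω) (hECE : ECE = {ω | 0 < π j (Z ω) ∧ 0 < π k (Z ω)})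
    (hECEpos : P ECE ≠ 0)
    -- stratification: S is a function of Z with finitely many values, and π_j(Z), π_k(Z)
    -- are constant on every level of S
    {𝓢 : Type*} [Fintype 𝓢] [MeasurableSpace 𝓢] [MeasurableSingletonClass 𝓢]
    (S : Ω → 𝓢) (hSZ : ∃ g : 𝓩 → 𝓢, Measurable g ∧ ∀ ω, S ω = g (Z ω))
    (hconstj : ∀ ω ω', S ω = S ω' → π j (Z ω) = π j (Z ω'))
    (hconstk : ∀ ω ω', S ω = S ω' → π k (Z ω) = π k (Z ω'))
    -- working model: a covariate sub-vector X of W and a function μjk of X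
    {𝓧 : Type*} [MeasurableSpace 𝓧]
    (X : Ω → 𝓧) (hXW : ∃ g : 𝓦 → 𝓧, Measurable g ∧ ∀ ω, X ω = g (W ω))
    (μjk : 𝓧 → ℝ) (hμjkm : Measurable μjk) (hμjk2 : MemLp (fun ω => μjk (X ω)) 2 P)
    (μkj : 𝓧 → ℝ) (hμkjm : Measurable μkj) (hμkj2 : MemLp (fun ω => μkj (X ω)) 2 P)
    -- θ's, residuals, δ's, λ's and c_jk
    (θjk θkj : ℝ) (hθjk : θjk = ∫ ω, Y j ω ∂P[|ECE]) (hθkj : θkj = ∫ ω, Y k ω ∂P[|ECE])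
    (εjk εkj : Ω → ℝ)
    (hεjk : ∀ ω, εjk ω = Y j ω - μjk (X ω)) (hεkj : ∀ ω, εkj ω = Y k ω - μkj (X ω))
    (δjk δkj : ℝ)
    (hδjk : δjk = ∫ ω, εjk ω ∂P[|ECE]) (hδkj : δkj = ∫ ω, εkj ω ∂P[|ECE])
    (lamjk lamkj : ℝ)
    (hlamjk : lamjk = variance (Y j) P[|ECE] - variance εjk P[|ECE])
    (hlamkj : lamkj = variance (Y k) P[|ECE] - variance εkj P[|ECE])
    (cjk : ℝ) (hcjk : cjk = cov P[|ECE] (Y j) (Y k) - cov P[|ECE] εjk εkj)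
    -- conditions (i)–(iii)
    (hU1 : ∀ᵐ ω ∂P[|ECE], condMeanOn P[|ECE] S εjk ω = δjk)
    (hU2 : ∀ᵐ ω ∂P[|ECE], condMeanOn P[|ECE] S εkj ω = δkj)
    (hii1 : ∀ᵐ ω ∂P[|ECE], condCovOn P[|ECE] S εjk (fun x => μjk (X x)) ω = 0)
    (hii2 : ∀ᵐ ω ∂P[|ECE], condCovOn P[|ECE] S εkj (fun x => μkj (X x)) ω = 0)
    (hiii1 : ∀ᵐ ω ∂P[|ECE], condCovOn P[|ECE] S εjk (fun x => μkj (X x)) ω = 0)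
    (hiii2 : ∀ᵐ ω ∂P[|ECE], condCovOn P[|ECE] S εkj (fun x => μjk (X x)) ω = 0)
    -- finiteness of the displayed conditional moments
    (hIntj : Integrable (fun ω => (Y j ω - θjk) ^ 2 / π j (Z ω)) P[|ECE])
    (hIntk : Integrable (fun ω => (Y k ω - θkj) ^ 2 / π k (Z ω)) P[|ECE])
    (hIntjε : Integrable (fun ω => (εjk ω - δjk) ^ 2 / π j (Z ω)) P[|ECE])
    (hIntkε : Integrable (fun ω => (εkj ω - δkj) ^ 2 / π k (Z ω)) P[|ECE])
    (hIntjμ : Integrable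
      (fun ω => (μjk (X ω) - ∫ x, μjk (X x) ∂P[|ECE]) ^ 2 * (1 / π j (Z ω) - 1)) P[|ECE])
    (hIntkμ : Integrable
      (fun ω => (μkj (X ω) - ∫ x, μkj (X x) ∂P[|ECE]) ^ 2 * (1 / π k (Z ω) - 1)) P[|ECE])
    -- the matrices
    (Ssipw Ssaipw M : Matrix (Fin 2) (Fin 2) ℝ)
    (hSsipw : Ssipw =
      !![∫ ω, (Y j ω - θjk) ^ 2 / π j (Z ω) ∂P[|ECE], 0;
         0, ∫ ω, (Y k ω - θkj) ^ 2 / π k (Z ω) ∂P[|ECE]])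
    (hSsaipw : Ssaipw =
      !![∫ ω, (εjk ω - δjk) ^ 2 / π j (Z ω) ∂P[|ECE], 0;
         0, ∫ ω, (εkj ω - δkj) ^ 2 / π k (Z ω) ∂P[|ECE]]
      + !![lamjk, cjk; cjk, lamkj])
    (hM : M =
      !![∫ ω, (μjk (X ω) - ∫ x, μjk (X x) ∂P[|ECE]) ^ 2 * (1 / π j (Z ω) - 1) ∂P[|ECE],
           -cov P[|ECE] (fun x => μjk (X x)) (fun x => μkj (X x));
         -cov P[|ECE] (fun x => μjk (X x)) (fun x => μkj (X x)),
           ∫ ω, (μkj (X ω) - ∫ x, μkj (X x) ∂P[|ECE]) ^ 2 * (1 / π k (Z ω) - 1) ∂P[|ECE]]) :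
    Ssipw - Ssaipw = M
    ∧ ((∀ᵐ ω ∂P[|ECE], π j (Z ω) + π k (Z ω) ≤ 1) → M.PosSemidef) :=
  stmt_14_general P Z Y hZ hY2 π hπmeas j k ECE hECE hECEpos S hSZ hconstj hconstk X μjk hμjk2 μkj
    hμkj2 θjk θkj hθjk hθkj εjk εkj hεjk hεkj δjk δkj hδjk hδkj lamjk lamkj hlamjk hlamkj cjk hcjk
    hU1 hU2 hii1 hii2 hiii1 hiii2 hIntj hIntk hIntjε hIntkε hIntjμ hIntkμ Ssipw Ssaipw M hSsipw
    hSsaipw hM
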